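/- Let G be a finite simple graph and let v be a degree-1 vertex of G. If (r, 𝒳) is a description for the graph G − v, then (r, 𝒳) is also a description for G. That is, for every set S consisting of exactly one vertex from each X ∈ 𝒳, the connected component H' of G − S containing r is acyclic and satisfies N_G(H') = S. -/

import Mathlib

namespace Secluded

open SimpleGraph

variable {V : Type*}

/-- The open neighborhood of a vertex set `S`: vertices outside `S` with a neighbor in `S`. -/
def openNbhd (G : SimpleGraph V) (S : Set V) : Set V :=
  {v | v ∉ S ∧ ∃ u ∈ S, G.Adj v u}

/-- The graph obtained from `G` by deleting the vertices in `D`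
(kept on the same vertex type; deleted vertices become isolated). -/
def gdelete (G : SimpleGraph V) (D : Set V) : SimpleGraph V where
  Adj x y := G.Adj x y ∧ x ∉ D ∧ y ∉ D
  symm := ⟨fun _ _ h => ⟨h.1.symm, h.2.2, h.2.1⟩⟩
  loopless := ⟨fun x h => G.loopless.irrefl x h.1⟩

/-- `S` induces a tree (connected and acyclic induced subgraph) in `G`. -/
def IsInducedTree (G : SimpleGraph V) (S : Set V) : Prop :=
  (G.induce S).IsTree

/-- `S` is a `k`-secluded tree in `G`. -/
def IsSecludedTree (G : SimpleGraph V) (k : ℕ) (S : Set V) : Prop :=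
  IsInducedTree G S ∧ (openNbhd G S).ncard ≤ k

/-- The set of `k`-secluded supertrees of `F` in `G`. -/
def secl (G : SimpleGraph V) (k : ℕ) (F : Set V) : Set (Set V) :=
  {S | IsSecludedTree G k S ∧ F ⊆ S}

/-- Total weight of a vertex set. -/
noncomputable def weight (w : V → ℕ) (S : Set V) : ℕ := ∑ᶠ x ∈ S, w x

/-- The maximum-weight elements of a collection of vertex sets. -/
def maxset (w : V → ℕ) (X : Set (Set V)) : Set (Set V) :=
  {S | S ∈ X ∧ ∀ S' ∈ X, weight w S' ≤ weight w S}

/-- `S` consists of exactly one vertex from each member of `𝒳`. -/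
def IsTransversal (𝒳 : Set (Set V)) (S : Set V) : Prop :=
  S ⊆ ⋃₀ 𝒳 ∧ ∀ X ∈ 𝒳, (S ∩ X).ncard = 1

/-- The vertex set of the connected component of `G − S` containing `r`. -/
def component (G : SimpleGraph V) (S : Set V) (r : V) : Set V :=
  {x | (gdelete G S).Reachable r x}

/-- `(r, 𝒳)` is a description for `G`. -/
def IsDescription (G : SimpleGraph V) (r : V) (𝒳 : Set (Set V)) : Prop :=
  (∀ X ∈ 𝒳, r ∉ X) ∧ 𝒳.Pairwise Disjoint ∧
    ∀ S : Set V, IsTransversal 𝒳 S →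
      (G.induce (component G S r)).IsAcyclic ∧ openNbhd G (component G S r) = S

/-- The induced tree (given by its vertex set `C`) is described by the description `D`. -/
def Describes (G : SimpleGraph V) (D : V × Set (Set V)) (C : Set V) : Prop :=
  D.1 ∈ C ∧ IsTransversal D.2 (openNbhd G C)

/-- `𝒯_G(𝔛)`: the set of induced trees of `G` described by some member of `𝔛`. -/
def treesOf (G : SimpleGraph V) (𝔛 : Set (V × Set (Set V))) : Set (Set V) :=
  {C | IsInducedTree G C ∧ ∃ D ∈ 𝔛, Describes G D C}

/-- No induced tree of `G` is described by two distinct members of `𝔛`. -/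
def NonRedundant (G : SimpleGraph V) (𝔛 : Set (V × Set (Set V))) : Prop :=
  ∀ C : Set V, IsInducedTree G C → ∀ D₁ ∈ 𝔛, ∀ D₂ ∈ 𝔛,
    Describes G D₁ C → Describes G D₂ C → D₁ = D₂

/-- Degree of a vertex. -/
noncomputable def degOf (G : SimpleGraph V) (v : V) : ℕ := (G.neighborSet v).ncard

/-! A vertex with at most one neighbour lies on no cycle and on no path between two other
vertices. Hence the component `H` of `G − S` containing `r` is the component `H'` of
`(G − v) − S` containing `r`, possibly together with the leaf `v`: a cycle of `H` is a cycle of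
`H'`, and every vertex of `S` adjacent to `H'` is adjacent to `H`. The inclusion `N_G(H) ⊆ S`
holds for every component of `G − S`. -/

theorem _root_.SimpleGraph.Walk.IsCycle.notMem_support_of_subsingleton_neighborSet
    {G : SimpleGraph V} {u x : V} {c : G.Walk u u} (hc : c.IsCycle)
    (hx : (G.neighborSet x).Subsingleton) :
    x ∉ c.support := by
  intro hxc
  obtain ⟨y, z, hyz, hyz_eq⟩ := Set.ncard_eq_two.mp (hc.ncard_neighborSet_toSubgraph_eq_two hxc)
  have hsub := c.toSubgraph.neighborSet_subset x
  rw [hyz_eq] at hsub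
  exact hyz (hx (hsub (by simp)) (hsub (by simp)))

theorem isAcyclic_induce_of_diff_subsingleton_neighborSet {G : SimpleGraph V} {s t : Set V}
    (ht : (G.induce t).IsAcyclic) (hst : ∀ x ∈ s, x ∉ t → (G.neighborSet x).Subsingleton) :
    (G.induce s).IsAcyclic := by
  intro a c hc
  set c' := c.map (Embedding.induce (G := G) s).toHom
  have hc' : c'.IsCycle := hc.map (Embedding.induce (G := G) s).injective
  have hsupp : ∀ x ∈ c'.support, x ∈ t := by
    intro x hx
    by_contra hxt
    have hxs : x ∈ s := by
      obtain ⟨y, -, rfl⟩ := List.mem_map.mp (by simpa only [c', Walk.support_map] using hx)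
      exact y.2
    exact hc'.notMem_support_of_subsingleton_neighborSet (hst x hxs hxt) hx
  have hlift : (c'.induce t hsupp).IsCycle := by
    rw [← Walk.isCycle_map_iff_of_injective (f := (Embedding.induce t).toHom)
      (Embedding.induce (G := G) t).injective, Walk.map_induce]
    exact hc'
  exact ht _ hlift

theorem gdelete_le (G : SimpleGraph V) (D : Set V) : gdelete G D ≤ G :=
  fun _ _ h => h.1

theorem gdelete_mono {G G' : SimpleGraph V} (h : G ≤ G') (D : Set V) :
    gdelete G D ≤ gdelete G' D :=
  fun _ _ hxy => ⟨h hxy.1, hxy.2⟩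

theorem gdelete_comm (G : SimpleGraph V) (D E : Set V) :
    gdelete (gdelete G D) E = gdelete (gdelete G E) D := by
  ext x y
  simp only [gdelete]
  tauto

theorem notMem_of_reachable_gdelete {G : SimpleGraph V} {D : Set V} {a b : V}
    (h : (gdelete G D).Reachable a b) (ha : a ∉ D) : b ∉ D := by
  rcases (reachable_iff_reflTransGen a b).mp h |>.cases_tail with rfl | ⟨c, -, hcb⟩
  · exact ha
  · exact hcb.2.2

theorem reachable_gdelete_of_forall_notMem_support {G : SimpleGraph V} {D : Set V} {a b : V} :
    (p : G.Walk a b) → (∀ x ∈ p.support, x ∉ D) → (gdelete G D).Reachable a b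
  | .nil, _ => .refl _
  | .cons h q, hp => by
    simp only [Walk.support_cons, List.mem_cons, forall_eq_or_imp] at hp
    have hadj : (gdelete G D).Adj _ _ := ⟨h, hp.1, hp.2 _ q.start_mem_support⟩
    exact hadj.reachable.trans (reachable_gdelete_of_forall_notMem_support q hp.2)

section Component

variable {G : SimpleGraph V} {S : Set V} {r : V}

theorem notMem_of_mem_component (hr : r ∉ S) {x : V} (hx : x ∈ component G S r) : x ∉ S :=
  notMem_of_reachable_gdelete hx hr

theorem component_mono {G' : SimpleGraph V} (h : G ≤ G') : component G S r ⊆ component G' S r :=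
  fun _ hx => hx.mono (gdelete_mono h S)

theorem openNbhd_component_subset (hr : r ∉ S) : openNbhd G (component G S r) ⊆ S := by
  rintro x ⟨hxH, y, hyH, hxy⟩
  by_contra hxS
  exact hxH (hyH.trans (show (gdelete G S).Adj y x from
    ⟨hxy.symm, notMem_of_mem_component hr hyH, hxS⟩).reachable)

theorem ne_of_mem_component_gdelete {v : V} {x : V} (hx : x ∈ component (gdelete G {v}) S r)
    (hr : r ≠ v) : x ≠ v :=
  notMem_of_reachable_gdelete (D := {v}) (Reachable.mono (gdelete_le _ S) hx) hr

theorem mem_component_gdelete_of_subsingleton_neighborSet {v : V}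
    (hv : (G.neighborSet v).Subsingleton) (hr : r ≠ v) {x : V} (hx : x ∈ component G S r)
    (hxv : x ≠ v) :
    x ∈ component (gdelete G {v}) S r := by
  obtain ⟨p, hp⟩ := Reachable.exists_isPath hx
  have hvp : v ∉ p.support := hp.isTrail.not_mem_support_of_subsingleton_neighborSet hr.symm
    hxv.symm (hv.anti (neighborSet_mono (gdelete_le G S) v))
  rw [component, Set.mem_ofPred_eq, gdelete_comm]
  exact reachable_gdelete_of_forall_notMem_support p fun y hy hyv => hvp (hyv ▸ hy)

end Component

theorem description_of_delete_leaf_general (G : SimpleGraph V)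
    (v : V) (hdeg : degOf G v = 1)
    (r : V) (hr : r ≠ v) (𝒳 : Set (Set V))
    (hd : IsDescription (gdelete G {v}) r 𝒳) :
    IsDescription G r 𝒳 := by
  obtain ⟨u, hu⟩ := Set.ncard_eq_one.mp hdeg
  have hleaf : (G.neighborSet v).Subsingleton := hu ▸ Set.subsingleton_singleton
  obtain ⟨hr𝒳, hdisj, hdesc⟩ := hd
  refine ⟨hr𝒳, hdisj, fun S hS => ?_⟩
  obtain ⟨hacyc, hnbhd⟩ := hdesc S hS
  have hrS : r ∉ S := fun h => by
    obtain ⟨X, hX, hrX⟩ := hS.1 h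
    exact hr𝒳 X hX hrX
  set H' := component (gdelete G {v}) S r
  refine ⟨isAcyclic_induce_of_diff_subsingleton_neighborSet (t := H') ?_ ?_, ?_⟩
  · exact hacyc.anti fun x y hxy => show (gdelete G {v}).Adj x y from
      ⟨hxy, ne_of_mem_component_gdelete x.2 hr, ne_of_mem_component_gdelete y.2 hr⟩
  · intro x hx hxH'
    obtain rfl | hxv := eq_or_ne x v
    · exact hleaf
    · exact absurd (mem_component_gdelete_of_subsingleton_neighborSet hleaf hr hx hxv) hxH'
  · refine (openNbhd_component_subset hrS).antisymm fun x hxS => ?_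
    obtain ⟨-, y, hyH', hxy⟩ := hnbhd.superset hxS
    exact ⟨fun hxH => notMem_of_mem_component hrS hxH hxS, y,
      component_mono (gdelete_le G {v}) hyH', hxy.1⟩

/-- if `v` is a degree-1 vertex of `G`, then any description for `G − v`
is also a description for `G`. -/
theorem description_of_delete_leaf [Fintype V] (G : SimpleGraph V)
    (v : V) (hdeg : degOf G v = 1)
    (r : V) (hr : r ≠ v) (𝒳 : Set (Set V)) (h𝒳 : ∀ X ∈ 𝒳, v ∉ X)
    (hd : IsDescription (gdelete G {v}) r 𝒳) :
    IsDescription G r 𝒳 :=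
  description_of_delete_leaf_general G v hdeg r hr 𝒳 hd

end Secluded
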